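/- Fix an integer k ≥ 1. For a real number R ≥ 1 let B(R) denote the set of integer (k+1)-tuples (a₁,…,a_k,b) with |aᵢ| ≤ R for all i, 0 < b ≤ R, and gcd(a₁,…,a_k,b) = 1. Then card B(R) is asymptotic to 2^k R^{k+1}/ζ(k+1) as R → ∞; that is, card B(R) · ζ(k+1) / (2^k R^{k+1}) tends to 1 as R → ∞. -/

import Mathlib

/-- `Bset k R` is the set of integer `(k+1)`-tuples `(a₁, …, a_k, b)` with `|aᵢ| ≤ R`
for all `i`, `0 < b ≤ R`, and `gcd(a₁, …, a_k, b) = 1`. -/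
def Bset (k : ℕ) (R : ℝ) : Set ((Fin k → ℤ) × ℤ) :=
  {p | (∀ i, (|p.1 i| : ℝ) ≤ R) ∧ 0 < p.2 ∧ (p.2 : ℝ) ≤ R ∧
    gcd (Finset.univ.gcd p.1) p.2 = 1}

/-- The value `ζ(k)` of the Riemann zeta function at an integer `k ≥ 2`,
as the real series `∑ 1/mᵏ`. -/
noncomputable def zetaVal (k : ℕ) : ℝ := ∑' m : ℕ, 1 / (m + 1 : ℝ) ^ k

/-!
With `N = ⌊R⌋`, Möbius inversion over the common divisor `d` of the tuple gives the exact formula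
`#B(R) = ∑_{d ≤ N} μ(d) (2⌊N/d⌋ + 1)^k ⌊N/d⌋`. After division by `R^(k+1)` the `d`-th summand
tends to `μ(d) 2^k / d^(k+1)` and is bounded by `3^k / d^(k+1)`, which is summable since `k ≥ 1`;
by dominated convergence `#B(R) / R^(k+1) → 2^k ∑ μ(d) / d^(k+1) = 2^k / ζ(k+1)`.
-/

open Finset Filter Topology ArithmeticFunction Moebius

namespace Int

theorem filter_dvd_Icc_one_eq_image {d : ℤ} (hd : 0 < d) (n : ℤ) :
    {x ∈ Icc 1 n | d ∣ x} = (Icc 1 (n / d)).image (d * ·) := by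
  ext x
  simp only [mem_filter, mem_image, mem_Icc, Int.le_ediv_iff_mul_le hd]
  constructor
  · rintro ⟨⟨h1, h2⟩, j, rfl⟩
    exact ⟨j, ⟨by nlinarith, by linarith⟩, rfl⟩
  · rintro ⟨j, ⟨h1, h2⟩, rfl⟩
    exact ⟨⟨by nlinarith, by linarith⟩, dvd_mul_right d j⟩

theorem filter_dvd_Icc_neg_eq_image {d : ℤ} (hd : 0 < d) (n : ℤ) :
    {x ∈ Icc (-n) n | d ∣ x} = (Icc (-(n / d)) (n / d)).image (d * ·) := by
  ext x
  simp only [mem_filter, mem_image, mem_Icc, neg_le, Int.le_ediv_iff_mul_le hd]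
  constructor
  · rintro ⟨⟨h1, h2⟩, j, rfl⟩
    exact ⟨j, ⟨by linarith, by linarith⟩, rfl⟩
  · rintro ⟨j, ⟨h1, h2⟩, rfl⟩
    exact ⟨⟨by linarith, by linarith⟩, dvd_mul_right d j⟩

theorem card_filter_dvd_Icc_one {d : ℕ} (hd : 0 < d) (n : ℕ) :
    #{x ∈ Icc (1 : ℤ) n | (d : ℤ) ∣ x} = n / d := by
  rw [filter_dvd_Icc_one_eq_image (by omega),
    card_image_of_injective _ (mul_right_injective₀ (by omega)), card_Icc, ← natCast_div]
  generalize n / d = q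
  omega

theorem card_filter_dvd_Icc_neg {d : ℕ} (hd : 0 < d) (n : ℕ) :
    #{x ∈ Icc (-n : ℤ) n | (d : ℤ) ∣ x} = 2 * (n / d) + 1 := by
  rw [filter_dvd_Icc_neg_eq_image (by omega),
    card_image_of_injective _ (mul_right_injective₀ (by omega)), card_Icc, ← natCast_div]
  generalize n / d = q
  omega

end Int

theorem ArithmeticFunction.sum_divisors_moebius (n : ℕ) :
    ∑ d ∈ n.divisors, μ d = if n = 1 then 1 else 0 := by
  rw [← coe_mul_zeta_apply, moebius_mul_coe_zeta, one_apply]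

theorem card_filter_eq_one_eq_sum_moebius {α : Type*} (s : Finset α) (f : α → ℕ) {N : ℕ}
    (hf : ∀ x ∈ s, f x ∈ Icc 1 N) :
    (#{x ∈ s | f x = 1} : ℤ) = ∑ d ∈ Icc 1 N, μ d * #{x ∈ s | d ∣ f x} := by
  have hdivisors : ∀ x ∈ s, {d ∈ Icc 1 N | d ∣ f x} = (f x).divisors := by
    intro x hx
    obtain ⟨hpos, hle⟩ := mem_Icc.1 (hf x hx)
    ext d
    simp only [mem_filter, mem_Icc, Nat.mem_divisors, Nat.one_le_iff_ne_zero.1 hpos, ne_eq,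
      not_false_eq_true, and_true]
    exact ⟨And.right, fun h ↦ ⟨⟨Nat.pos_of_dvd_of_pos h hpos, (Nat.le_of_dvd hpos h).trans hle⟩, h⟩⟩
  calc (#{x ∈ s | f x = 1} : ℤ) = ∑ x ∈ s, ∑ d ∈ (f x).divisors, μ d := by
        simp only [sum_divisors_moebius, sum_boole]
    _ = ∑ x ∈ s, ∑ d ∈ Icc 1 N, if d ∣ f x then μ d else 0 :=
        sum_congr rfl fun x hx ↦ by rw [← sum_filter, hdivisors x hx]
    _ = ∑ d ∈ Icc 1 N, μ d * #{x ∈ s | d ∣ f x} := by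
        rw [sum_comm]
        simp only [← sum_filter, sum_const, nsmul_eq_mul, mul_comm]

section TupleGcd

variable {ι : Type*} [Fintype ι]

def tupleGcd (p : (ι → ℤ) × ℤ) : ℕ := Int.gcd (univ.gcd p.1) p.2

theorem natCast_tupleGcd (p : (ι → ℤ) × ℤ) : (tupleGcd p : ℤ) = gcd (univ.gcd p.1) p.2 :=
  Int.coe_gcd _ _

theorem natCast_dvd_tupleGcd_iff {d : ℕ} {p : (ι → ℤ) × ℤ} :
    d ∣ tupleGcd p ↔ (∀ i, (d : ℤ) ∣ p.1 i) ∧ (d : ℤ) ∣ p.2 := by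
  rw [← Int.natCast_dvd_natCast, natCast_tupleGcd, _root_.dvd_gcd_iff, Finset.dvd_gcd_iff]
  simp only [mem_univ, true_imp_iff]

variable (ι) [DecidableEq ι]

noncomputable def tupleBox (N : ℕ) : Finset ((ι → ℤ) × ℤ) :=
  Fintype.piFinset (fun _ ↦ Icc (-N : ℤ) N) ×ˢ Icc 1 (N : ℤ)

variable {ι}

theorem tupleGcd_mem_Icc_of_mem_tupleBox {N : ℕ} {p : (ι → ℤ) × ℤ} (hp : p ∈ tupleBox ι N) :
    tupleGcd p ∈ Icc 1 N := by
  simp only [tupleBox, mem_product, mem_Icc] at hp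
  have hdvd : (tupleGcd p : ℤ) ∣ p.2 := natCast_tupleGcd p ▸ gcd_dvd_right _ _
  have hle := Int.le_of_dvd (by omega) hdvd
  have hne : tupleGcd p ≠ 0 := fun h ↦ by simp only [h, Nat.cast_zero, zero_dvd_iff] at hdvd; omega
  exact mem_Icc.2 ⟨Nat.one_le_iff_ne_zero.2 hne, by omega⟩

theorem card_filter_dvd_tupleGcd_tupleBox {d : ℕ} (hd : 0 < d) (N : ℕ) :
    #{p ∈ tupleBox ι N | d ∣ tupleGcd p} = (2 * (N / d) + 1) ^ Fintype.card ι * (N / d) := by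
  have hpi : {a ∈ Fintype.piFinset (fun _ : ι ↦ Icc (-N : ℤ) N) | ∀ i, (d : ℤ) ∣ a i} =
      Fintype.piFinset fun _ ↦ {x ∈ Icc (-N : ℤ) N | (d : ℤ) ∣ x} := by
    ext a
    simp only [mem_filter, Fintype.mem_piFinset, forall_and]
  simp only [tupleBox, natCast_dvd_tupleGcd_iff]
  rw [filter_product (fun a : ι → ℤ ↦ ∀ i, (d : ℤ) ∣ a i), card_product, hpi,
    Fintype.card_piFinset, prod_const, card_univ, Int.card_filter_dvd_Icc_neg hd,
    Int.card_filter_dvd_Icc_one hd]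

end TupleGcd

theorem Bset_eq_filter_tupleBox (k : ℕ) {R : ℝ} (hR : 0 ≤ R) :
    Bset k R = {p ∈ tupleBox (Fin k) ⌊R⌋₊ | tupleGcd p = 1} := by
  have hle : ∀ b : ℤ, (b : ℝ) ≤ R ↔ b ≤ (⌊R⌋₊ : ℤ) := fun b ↦ by
    rw [Int.natCast_floor_eq_floor hR, Int.le_floor]
  have habs : ∀ a : ℤ, |(a : ℝ)| ≤ R ↔ -(⌊R⌋₊ : ℤ) ≤ a ∧ a ≤ ⌊R⌋₊ := fun a ↦ by
    rw [← abs_le, ← Int.cast_abs, hle]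
  ext p
  simp only [Bset, Set.mem_ofPred_eq, coe_filter, tupleBox, mem_product, Fintype.mem_piFinset,
    mem_Icc, habs, hle, ← natCast_tupleGcd, Nat.cast_eq_one]
  constructor
  · rintro ⟨ha, hb1, hb2, hg⟩
    exact ⟨⟨ha, by omega, hb2⟩, hg⟩
  · rintro ⟨⟨ha, hb1, hb2⟩, hg⟩
    exact ⟨ha, by omega, hb2, hg⟩

theorem natCast_card_Bset_eq_sum_moebius (k : ℕ) {R : ℝ} (hR : 0 ≤ R) :
    (Nat.card (Bset k R) : ℤ) =
      ∑ d ∈ Icc 1 ⌊R⌋₊, μ d * ((2 * (⌊R⌋₊ / d) + 1) ^ k * (⌊R⌋₊ / d) : ℕ) := by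
  rw [Bset_eq_filter_tupleBox k hR, Nat.card_coe_set_eq, Set.ncard_coe_finset,
    card_filter_eq_one_eq_sum_moebius _ _ fun _ ↦ tupleGcd_mem_Icc_of_mem_tupleBox]
  refine sum_congr rfl fun d hd ↦ ?_
  rw [card_filter_dvd_tupleGcd_tupleBox (mem_Icc.1 hd).1, Fintype.card_fin]

theorem tendsto_natFloor_div_natCast_div (d : ℕ) :
    Tendsto (fun R : ℝ ↦ ((⌊R⌋₊ / d : ℕ) : ℝ) / R) atTop (𝓝 (d : ℝ)⁻¹) := by
  rcases Nat.eq_zero_or_pos d with rfl | hd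
  · simp
  have hd' : (0 : ℝ) < d := by exact_mod_cast hd
  have hfloor : Tendsto (fun R : ℝ ↦ (⌊R / d⌋₊ : ℝ) / (R / d) * (d : ℝ)⁻¹) atTop
      (𝓝 (d : ℝ)⁻¹) := by
    simpa using (tendsto_nat_floor_div_atTop.comp (tendsto_id.atTop_div_const hd')).mul_const _
  refine hfloor.congr' ?_
  filter_upwards [eventually_gt_atTop 0] with R hR
  rw [Nat.floor_div_natCast]
  field_simp

noncomputable def moebiusSummand (k : ℕ) (R : ℝ) (d : ℕ) : ℝ :=
  μ d * ((2 * (⌊R⌋₊ / d) + 1) ^ k * (⌊R⌋₊ / d) : ℕ) / R ^ (k + 1)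

theorem tsum_moebiusSummand (k : ℕ) {R : ℝ} (hR : 0 ≤ R) :
    ∑' d, moebiusSummand k R d = Nat.card (Bset k R) / R ^ (k + 1) := by
  rw [tsum_eq_sum (s := Icc 1 ⌊R⌋₊), ← Int.cast_natCast, natCast_card_Bset_eq_sum_moebius k hR]
  · simp only [Int.cast_sum, Int.cast_mul, Int.cast_natCast, sum_div]
    rfl
  intro d hd
  rcases Nat.eq_zero_or_pos d with rfl | hd0
  · simp [moebiusSummand]
  have hdiv : ⌊R⌋₊ / d = 0 := Nat.div_eq_of_lt (by simp only [mem_Icc] at hd; omega)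
  simp [moebiusSummand, hdiv]

theorem tendsto_moebiusSummand (k d : ℕ) :
    Tendsto (fun R ↦ moebiusSummand k R d) atTop (𝓝 (μ d * 2 ^ k / (d : ℝ) ^ (k + 1))) := by
  have hq := tendsto_natFloor_div_natCast_div d
  have hlim : Tendsto (fun R : ℝ ↦ (μ d : ℝ) * (2 * (((⌊R⌋₊ / d : ℕ) : ℝ) / R) + R⁻¹) ^ k *
      (((⌊R⌋₊ / d : ℕ) : ℝ) / R)) atTop (𝓝 ((μ d : ℝ) * (2 * (d : ℝ)⁻¹ + 0) ^ k * (d : ℝ)⁻¹)) :=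
    (tendsto_const_nhds.mul (((hq.const_mul 2).add tendsto_inv_atTop_zero).pow k)).mul hq
  convert hlim.congr' ?_ using 2
  · ring
  filter_upwards [eventually_gt_atTop 0] with R hR
  have hsum : 2 * (((⌊R⌋₊ / d : ℕ) : ℝ) / R) + R⁻¹ = (2 * ((⌊R⌋₊ / d : ℕ) : ℝ) + 1) / R := by
    field_simp
  simp only [moebiusSummand, hsum, div_pow, pow_succ]
  push_cast
  field_simp

theorem abs_moebiusSummand_le (k : ℕ) {R : ℝ} (hR : 0 < R) (d : ℕ) :
    |moebiusSummand k R d| ≤ 3 ^ k / (d : ℝ) ^ (k + 1) := by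
  set q := ⌊R⌋₊ / d with hq
  rcases Nat.eq_zero_or_pos q with hq0 | hq0
  · simp only [moebiusSummand, ← hq, hq0, mul_zero, Nat.cast_zero, zero_div, abs_zero]
    positivity
  have hd' : (0 : ℝ) < d := by
    have : d ≠ 0 := by rintro rfl; simp [hq] at hq0
    positivity
  have hqR : (q : ℝ) ≤ R / d := by
    rw [le_div_iff₀ hd', ← Nat.cast_mul]
    exact (Nat.cast_le.2 (Nat.div_mul_le_self _ _)).trans (Nat.floor_le hR.le)
  have h2q : 2 * (q : ℝ) + 1 ≤ 3 * (R / d) := by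
    have : (1 : ℝ) ≤ q := by exact_mod_cast hq0
    linarith
  have hμ : |(μ d : ℝ)| ≤ 1 := by exact_mod_cast abs_moebius_le_one
  calc |moebiusSummand k R d| = |(μ d : ℝ)| * ((2 * q + 1) ^ k * q) / R ^ (k + 1) := by
        simp only [moebiusSummand, ← hq]
        push_cast
        rw [abs_div, abs_mul, abs_of_pos (by positivity : 0 < R ^ (k + 1)),
          abs_of_nonneg (by positivity : (0 : ℝ) ≤ (2 * q + 1) ^ k * q)]
    _ ≤ 1 * ((3 * (R / d)) ^ k * (R / d)) / R ^ (k + 1) := by gcongr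
    _ = 3 ^ k / (d : ℝ) ^ (k + 1) := by
        rw [mul_pow, div_pow, pow_succ, pow_succ]
        field_simp

theorem tendsto_card_Bset_div_pow {k : ℕ} (hk : 1 ≤ k) :
    Tendsto (fun R ↦ (Nat.card (Bset k R) : ℝ) / R ^ (k + 1)) atTop
      (𝓝 (2 ^ k * ∑' d : ℕ, (μ d : ℝ) / d ^ (k + 1))) := by
  have hbound : Summable fun d : ℕ ↦ (3 : ℝ) ^ k / (d : ℝ) ^ (k + 1) :=
    ((Real.summable_one_div_nat_pow.2 (by omega)).mul_left _).congr fun _ ↦ mul_one_div _ _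
  have hdom := tendsto_tsum_of_dominated_convergence hbound (tendsto_moebiusSummand k) <| by
    filter_upwards [eventually_gt_atTop 0] with R hR d
    exact abs_moebiusSummand_le k hR d
  have hlimit : ∑' d : ℕ, (μ d : ℝ) * 2 ^ k / (d : ℝ) ^ (k + 1) =
      2 ^ k * ∑' d : ℕ, (μ d : ℝ) / d ^ (k + 1) := by
    rw [← tsum_mul_left]
    exact tsum_congr fun d ↦ by ring
  rw [← hlimit]
  refine hdom.congr' ?_
  filter_upwards [eventually_ge_atTop 0] with R hR
  exact tsum_moebiusSummand k hR

theorem tsum_moebius_div_pow_mul_zetaVal {s : ℕ} (hs : 1 < s) :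
    (∑' n : ℕ, (μ n : ℝ) / n ^ s) * zetaVal s = 1 := by
  have hs' : 1 < (s : ℂ).re := by simpa using (Nat.one_lt_cast (α := ℝ)).2 hs
  have hL : ((∑' n : ℕ, (μ n : ℝ) / n ^ s : ℝ) : ℂ) = LSeries (fun n ↦ (μ n : ℂ)) s := by
    rw [Complex.ofReal_tsum, LSeries]
    refine tsum_congr fun n ↦ ?_
    rw [LSeries.term_of_ne_zero' (by exact_mod_cast (by omega : s ≠ 0)), Complex.cpow_natCast]
    push_cast
    rfl
  have hζ : ((zetaVal s : ℝ) : ℂ) = riemannZeta s := by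
    rw [zeta_eq_tsum_one_div_nat_add_one_cpow hs', zetaVal, Complex.ofReal_tsum]
    simp [Complex.cpow_natCast]
  have h := LSeries_one_mul_Lseries_moebius hs'
  rw [LSeries_one_eq_riemannZeta hs', ← hζ, ← hL] at h
  exact_mod_cast (mul_comm _ _).trans h

/-- `card B(R)` is asymptotic to `2^k R^(k+1) / ζ(k+1)` as `R → ∞`. -/
theorem card_Bset_asymptotic (k : ℕ) (hk : 1 ≤ k) :
    Filter.Tendsto
      (fun R : ℝ => (Nat.card (Bset k R) : ℝ) * zetaVal (k + 1) / (2 ^ k * R ^ (k + 1)))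
      Filter.atTop (nhds 1) := by
  have hlim := (tendsto_card_Bset_div_pow hk).mul_const (zetaVal (k + 1) / 2 ^ k)
  have hone : 2 ^ k * (∑' d : ℕ, (μ d : ℝ) / d ^ (k + 1)) * (zetaVal (k + 1) / 2 ^ k) = 1 := by
    rw [← tsum_moebius_div_pow_mul_zetaVal (by omega : 1 < k + 1)]
    field_simp
  rw [hone] at hlim
  exact hlim.congr fun R ↦ by ring
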